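/- arXiv:0807.2108 — 2 statements merged into one kernel-verified Lean document; each statement's English description precedes it below -/
import Mathlib

section
/- Stability of the d-continuity method for 1/2 < γ ≤ 1: under the d-continuity domain decomposition method with linearly independent constraints and trapezoidal parameter 1/2 < γ ≤ 1, all quantities at integer time levels are bounded: there exists a constant C > 0 such that for all i ∈ {1,…,S} and all n ∈ ℕ, ‖d_i(n)‖ ≤ C, ‖v_i(n)‖ ≤ C, and ‖λ(n)‖ ≤ C. -/
/-!
Testing the subdomain equations against any `z` with `∑ᵢ Cᵢ zᵢ = 0` removes the multipliers:
`∑ᵢ zᵢ ⬝ Mᵢ vᵢ(n) + ∑ᵢ zᵢ ⬝ Kᵢ dᵢ(n) = 0`. The trapezoidal increment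
`w = (1 - γ) v(n) + γ v(n+1) = (d(n+1) - d(n)) / Δt` is such a `z`. Testing the difference of the
equations at `n` and `n+1` against `w` shows that `∑ᵢ vᵢ ⬝ Mᵢ vᵢ` does not increase, and testing
their sum shows the same for `∑ᵢ dᵢ ⬝ Kᵢ dᵢ + Δt (γ - 1/2) ∑ᵢ vᵢ ⬝ Mᵢ vᵢ`; both need `γ ≥ 1/2`.
This bounds `v`, but `∑ᵢ dᵢ ⬝ Kᵢ dᵢ` only controls `d` up to rigid modes (`K z = 0`,
`∑ᵢ Cᵢ zᵢ = 0`). Testing against a rigid mode shows that `v(n)` is `M`-orthogonal to all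
of them, so `d(n) - d(0)` stays in a subspace on which the `K`-form is definite. Finally
`Cᵢᵀ λ = Mᵢ vᵢ + Kᵢ dᵢ` is bounded and `μ ↦ (Cᵢᵀ μ)ᵢ` is injective.
-/

open Matrix

noncomputable def enorm {k : ℕ} (x : Fin k → ℝ) : ℝ := Real.sqrt (x ⬝ᵥ x)

open Bornology Set
open scoped Pointwise

namespace LinearMap.BilinForm

section

variable {V : Type*} [AddCommGroup V] [Module ℝ V] (B : LinearMap.BilinForm ℝ V)

lemma apply_sub_self_add_apply_add_self (x y : V) :
    B (x - y) (x - y) + B (x + y) (x + y) = 2 * B x x + 2 * B y y := by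
  simp only [add_left, sub_left, add_right, sub_right]
  ring

variable {B}

lemma IsSymm.apply_trapezoid_sub (hB : B.IsSymm) (γ : ℝ) (a b : V) :
    B ((1 - γ) • a + γ • b) (b - a) =
      (B b b - B a a) / 2 + (γ - 1 / 2) * B (b - a) (b - a) := by
  simp only [add_left, sub_left, smul_left, sub_right, hB.eq b a]
  ring

lemma IsSymm.apply_trapezoid_add (hB : B.IsSymm) (γ : ℝ) (a b : V) :
    B ((1 - γ) • a + γ • b) (a + b) =
      B (a + b) (a + b) / 2 + (γ - 1 / 2) * (B b b - B a a) := by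
  simp only [add_left, smul_left, add_right, hB.eq b a]
  ring

lemma IsSymm.apply_add_smul_self_sub (hB : B.IsSymm) (t : ℝ) (d w : V) :
    B (d + t • w) (d + t • w) - B d d = t * B w (d + (d + t • w)) := by
  simp only [add_left, smul_left, add_right, smul_right, hB.eq d w]
  ring

end

section Normed

variable {V : Type*} [NormedAddCommGroup V] [NormedSpace ℝ V] [FiniteDimensional ℝ V]
  {B : LinearMap.BilinForm ℝ V}

lemma continuous_apply_self (B : LinearMap.BilinForm ℝ V) : Continuous fun x => B x x :=
  B.toContinuousBilinearMap.continuous₂.comp (continuous_id.prodMk continuous_id)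

lemma exists_pos_mul_norm_sq_le {U : Submodule ℝ V} (hpos : ∀ x ∈ U, x ≠ 0 → 0 < B x x) :
    ∃ c > 0, ∀ x ∈ U, c * ‖x‖ ^ 2 ≤ B x x := by
  have hcompact : IsCompact (Metric.sphere (0 : V) 1 ∩ U) :=
    (isCompact_sphere 0 1).inter_right U.closed_of_finiteDimensional
  obtain ⟨c, hc, hcle⟩ := hcompact.exists_forall_le' B.continuous_apply_self.continuousOn
    fun x hx => hpos x hx.2 (ne_zero_of_mem_unit_sphere ⟨x, hx.1⟩)
  refine ⟨c, hc, fun x hx => ?_⟩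
  rcases eq_or_ne x 0 with rfl | hx0
  · simp
  have hnorm : 0 < ‖x‖ := norm_pos_iff.mpr hx0
  have hunit : ‖x‖⁻¹ • x ∈ Metric.sphere (0 : V) 1 ∩ U :=
    ⟨by simp [norm_smul, hnorm.ne'], U.smul_mem _ hx⟩
  have h := hcle _ hunit
  rw [smul_left, smul_right, ← mul_assoc, ← sq, inv_pow, inv_mul_eq_div,
    le_div_iff₀ (by positivity)] at h
  linarith

lemma isBounded_setOf_apply_self_le {U : Submodule ℝ V} (hpos : ∀ x ∈ U, x ≠ 0 → 0 < B x x)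
    (R : ℝ) : IsBounded {x | x ∈ U ∧ B x x ≤ R} := by
  obtain ⟨c, hc, hle⟩ := exists_pos_mul_norm_sq_le hpos
  refine isBounded_iff_forall_norm_le.mpr ⟨Real.sqrt (R / c), fun x ⟨hxU, hxR⟩ => ?_⟩
  refine Real.le_sqrt_of_sq_le ((le_div_iff₀ hc).mpr ?_)
  linarith [hle x hxU]

end Normed

end LinearMap.BilinForm

section Blocks

variable {ι : Type*} {η : ι → Type*} {κ : Type*}

def constraintTranspose [Fintype κ] (C : ∀ i, Matrix κ (η i) ℝ) : (κ → ℝ) →ₗ[ℝ] ∀ i, η i → ℝ :=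
  LinearMap.pi fun i => (C i)ᵀ.mulVecLin

@[simp]
lemma constraintTranspose_apply [Fintype κ] (C : ∀ i, Matrix κ (η i) ℝ) (μ : κ → ℝ) (i : ι) :
    constraintTranspose C μ i = (C i)ᵀ *ᵥ μ := rfl

variable [∀ i, Fintype (η i)]

def blockMulVec (A : ∀ i, Matrix (η i) (η i) ℝ) : (∀ i, η i → ℝ) →ₗ[ℝ] ∀ i, η i → ℝ :=
  LinearMap.pi fun i => (A i).mulVecLin ∘ₗ LinearMap.proj i

@[simp]
lemma blockMulVec_apply (A : ∀ i, Matrix (η i) (η i) ℝ) (x : ∀ i, η i → ℝ) (i : ι) :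
    blockMulVec A x i = A i *ᵥ x i := rfl

variable [Fintype ι]

def blockForm (A : ∀ i, Matrix (η i) (η i) ℝ) : LinearMap.BilinForm ℝ (∀ i, η i → ℝ) :=
  LinearMap.mk₂ ℝ (fun x y => ∑ i, x i ⬝ᵥ A i *ᵥ y i)
    (fun x x' y => by simp only [Pi.add_apply, add_dotProduct, Finset.sum_add_distrib])
    (fun c x y => by simp only [Pi.smul_apply, smul_dotProduct, smul_eq_mul, Finset.mul_sum])
    (fun x y y' => by simp only [Pi.add_apply, mulVec_add, dotProduct_add, Finset.sum_add_distrib])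
    (fun c x y => by
      simp only [Pi.smul_apply, mulVec_smul, dotProduct_smul, smul_eq_mul, Finset.mul_sum])

def constraintMap (C : ∀ i, Matrix κ (η i) ℝ) : (∀ i, η i → ℝ) →ₗ[ℝ] κ → ℝ :=
  ∑ i, (C i).mulVecLin ∘ₗ LinearMap.proj i

variable {A : ∀ i, Matrix (η i) (η i) ℝ}

@[simp]
lemma blockForm_apply (A : ∀ i, Matrix (η i) (η i) ℝ) (x y : ∀ i, η i → ℝ) :
    blockForm A x y = ∑ i, x i ⬝ᵥ A i *ᵥ y i := rfl

@[simp]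
lemma constraintMap_apply (C : ∀ i, Matrix κ (η i) ℝ) (x : ∀ i, η i → ℝ) :
    constraintMap C x = ∑ i, C i *ᵥ x i := by
  simp [constraintMap]

lemma blockForm_isSymm (hA : ∀ i, (A i).IsHermitian) : (blockForm A).IsSymm := by
  refine ⟨fun x y => Finset.sum_congr rfl fun i _ => ?_⟩
  rw [dotProduct_mulVec, ← mulVec_transpose, dotProduct_comm,
    ← conjTranspose_eq_transpose_of_trivial, (hA i).eq]

lemma blockForm_self_nonneg (hA : ∀ i, (A i).PosSemidef) (x : ∀ i, η i → ℝ) :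
    0 ≤ blockForm A x x :=
  Finset.sum_nonneg fun i _ => by simpa using (hA i).dotProduct_mulVec_nonneg (x i)

lemma blockForm_self_pos (hA : ∀ i, (A i).PosDef) {x : ∀ i, η i → ℝ} (hx : x ≠ 0) :
    0 < blockForm A x x := by
  obtain ⟨j, hj⟩ := Function.ne_iff.mp hx
  exact Finset.sum_pos' (fun i _ => by simpa using (hA i).posSemidef.dotProduct_mulVec_nonneg (x i))
    ⟨j, Finset.mem_univ j, by simpa using (hA j).dotProduct_mulVec_pos hj⟩

lemma blockMulVec_eq_zero_of_blockForm_self_eq_zero (hA : ∀ i, (A i).PosSemidef)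
    {x : ∀ i, η i → ℝ} (hx : blockForm A x x = 0) : blockMulVec A x = 0 := by
  have hterm := (Finset.sum_eq_zero_iff_of_nonneg fun i _ => by
    simpa using (hA i).dotProduct_mulVec_nonneg (x i)).mp hx
  funext i
  exact ((hA i).dotProduct_mulVec_zero_iff (x i)).mp (by simpa using hterm i (Finset.mem_univ i))

lemma sum_dotProduct_constraintTranspose [Fintype κ] (C : ∀ i, Matrix κ (η i) ℝ)
    (z : ∀ i, η i → ℝ) (μ : κ → ℝ) :
    ∑ i, z i ⬝ᵥ (C i)ᵀ *ᵥ μ = constraintMap C z ⬝ᵥ μ := by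
  simp only [constraintMap_apply, sum_dotProduct, dotProduct_mulVec, vecMul_transpose]

lemma blockForm_eq_zero_of_mem_ker {z : ∀ i, η i → ℝ} (hz : z ∈ LinearMap.ker (blockMulVec A))
    (x : ∀ i, η i → ℝ) : blockForm A x z = 0 := by
  simp only [blockForm_apply, ← blockMulVec_apply, LinearMap.mem_ker.mp hz, Pi.zero_apply,
    dotProduct_zero, Finset.sum_const_zero]

def rigidModes (K : ∀ i, Matrix (η i) (η i) ℝ) (C : ∀ i, Matrix κ (η i) ℝ) :
    Submodule ℝ (∀ i, η i → ℝ) :=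
  LinearMap.ker (blockMulVec K) ⊓ LinearMap.ker (constraintMap C)

def flexibleModes (M K : ∀ i, Matrix (η i) (η i) ℝ) (C : ∀ i, Matrix κ (η i) ℝ) :
    Submodule ℝ (∀ i, η i → ℝ) :=
  LinearMap.ker (constraintMap C) ⊓ (blockForm M).orthogonal (rigidModes K C)

lemma blockForm_self_pos_of_mem_flexibleModes {M K : ∀ i, Matrix (η i) (η i) ℝ}
    {C : ∀ i, Matrix κ (η i) ℝ} (hM : ∀ i, (M i).PosDef) (hK : ∀ i, (K i).PosSemidef)
    {x : ∀ i, η i → ℝ} (hx : x ∈ flexibleModes M K C) (hx0 : x ≠ 0) :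
    0 < blockForm K x x := by
  refine (blockForm_self_nonneg hK x).lt_of_ne fun hKx => hx0 ?_
  have hrigid : x ∈ rigidModes K C :=
    ⟨blockMulVec_eq_zero_of_blockForm_self_eq_zero hK hKx.symm, hx.1⟩
  by_contra hne
  exact (blockForm_self_pos hM hne).ne' (hx.2 x hrigid)

end Blocks

section Scheme

variable {ι : Type*} [Fintype ι] {η : ι → Type*} [∀ i, Fintype (η i)] {κ : Type*} [Fintype κ]

structure IsDContinuitySolution (M K : ∀ i, Matrix (η i) (η i) ℝ) (C : ∀ i, Matrix κ (η i) ℝ)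
    (Δt γ : ℝ) (d v : ℕ → ∀ i, η i → ℝ) (lam : ℕ → κ → ℝ) : Prop where
  equation : ∀ n i, M i *ᵥ v n i + K i *ᵥ d n i = (C i)ᵀ *ᵥ lam n
  update : ∀ n, d (n + 1) = d n + Δt • ((1 - γ) • v n + γ • v (n + 1))
  continuity : ∀ n, constraintMap C (d n) = 0

namespace IsDContinuitySolution

variable {M K : ∀ i, Matrix (η i) (η i) ℝ} {C : ∀ i, Matrix κ (η i) ℝ} {Δt γ : ℝ}
  {d v : ℕ → ∀ i, η i → ℝ} {lam : ℕ → κ → ℝ}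

lemma blockForm_add_blockForm_eq_zero (hs : IsDContinuitySolution M K C Δt γ d v lam)
    {z : ∀ i, η i → ℝ} (hz : z ∈ LinearMap.ker (constraintMap C)) (n : ℕ) :
    blockForm M z (v n) + blockForm K z (d n) = 0 := by
  simp only [blockForm_apply, ← Finset.sum_add_distrib, ← dotProduct_add, hs.equation,
    sum_dotProduct_constraintTranspose, LinearMap.mem_ker.mp hz, zero_dotProduct]

lemma increment_mem_ker (hs : IsDContinuitySolution M K C Δt γ d v lam) (hΔt : Δt ≠ 0)
    (n : ℕ) : (1 - γ) • v n + γ • v (n + 1) ∈ LinearMap.ker (constraintMap C) := by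
  have h := hs.continuity (n + 1)
  rw [hs.update, map_add, hs.continuity n, zero_add, map_smul, smul_eq_zero] at h
  exact h.resolve_left hΔt

lemma massEnergy_antitone (hs : IsDContinuitySolution M K C Δt γ d v lam)
    (hM : ∀ i, (M i).PosSemidef) (hK : ∀ i, (K i).PosSemidef) (hΔt : 0 < Δt) (hγ : 1 / 2 ≤ γ) :
    Antitone fun n => blockForm M (v n) (v n) := by
  refine antitone_nat_of_succ_le fun n => ?_
  have hw := hs.increment_mem_ker hΔt.ne' n
  have h₁ := hs.blockForm_add_blockForm_eq_zero hw (n + 1)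
  have h₀ := hs.blockForm_add_blockForm_eq_zero hw n
  set w := (1 - γ) • v n + γ • v (n + 1)
  rw [hs.update n, map_add (blockForm K w), map_smul, smul_eq_mul] at h₁
  have hwork : blockForm M w (v (n + 1) - v n) + Δt * blockForm K w w = 0 := by
    rw [map_sub]
    linear_combination h₁ - h₀
  rw [(blockForm_isSymm fun i => (hM i).isHermitian).apply_trapezoid_sub] at hwork
  nlinarith [blockForm_self_nonneg hM (v (n + 1) - v n), blockForm_self_nonneg hK w]

lemma modifiedEnergy_antitone (hs : IsDContinuitySolution M K C Δt γ d v lam)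
    (hM : ∀ i, (M i).PosSemidef) (hK : ∀ i, (K i).IsHermitian) (hΔt : 0 < Δt) :
    Antitone fun n => blockForm K (d n) (d n) + Δt * (γ - 1 / 2) * blockForm M (v n) (v n) := by
  refine antitone_nat_of_succ_le fun n => ?_
  have hw := hs.increment_mem_ker hΔt.ne' n
  have h₁ := hs.blockForm_add_blockForm_eq_zero hw (n + 1)
  have h₀ := hs.blockForm_add_blockForm_eq_zero hw n
  set w := (1 - γ) • v n + γ • v (n + 1)
  have hMw := (blockForm_isSymm fun i => (hM i).isHermitian).apply_trapezoid_add γ (v n) (v (n + 1))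
  have hKw := (blockForm_isSymm hK).apply_add_smul_self_sub Δt (d n) w
  rw [← hs.update n] at hKw
  rw [map_add] at hMw hKw
  nlinarith [mul_nonneg hΔt.le (blockForm_self_nonneg hM (v n + v (n + 1)))]

lemma blockForm_v_eq_zero_of_mem_rigidModes (hs : IsDContinuitySolution M K C Δt γ d v lam)
    (hK : ∀ i, (K i).IsHermitian) {z : ∀ i, η i → ℝ} (hz : z ∈ rigidModes K C) (n : ℕ) :
    blockForm M z (v n) = 0 := by
  have h := hs.blockForm_add_blockForm_eq_zero hz.2 n
  rwa [(blockForm_isSymm hK).eq, blockForm_eq_zero_of_mem_ker hz.1, add_zero] at h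

lemma increment_mem_flexibleModes (hs : IsDContinuitySolution M K C Δt γ d v lam)
    (hK : ∀ i, (K i).IsHermitian) (hΔt : Δt ≠ 0) (n : ℕ) :
    (1 - γ) • v n + γ • v (n + 1) ∈ flexibleModes M K C := by
  refine ⟨hs.increment_mem_ker hΔt n, fun z hz => ?_⟩
  change blockForm M z _ = 0
  rw [map_add, map_smul, map_smul, hs.blockForm_v_eq_zero_of_mem_rigidModes hK hz,
    hs.blockForm_v_eq_zero_of_mem_rigidModes hK hz, smul_zero, smul_zero, add_zero]

lemma sub_initial_mem_flexibleModes (hs : IsDContinuitySolution M K C Δt γ d v lam)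
    (hK : ∀ i, (K i).IsHermitian) (hΔt : Δt ≠ 0) : ∀ n, d n - d 0 ∈ flexibleModes M K C
  | 0 => by simp
  | n + 1 => by
    rw [hs.update n, add_sub_right_comm]
    exact add_mem (hs.sub_initial_mem_flexibleModes hK hΔt n)
      (Submodule.smul_mem _ _ (hs.increment_mem_flexibleModes hK hΔt n))

lemma isBounded_range_v (hs : IsDContinuitySolution M K C Δt γ d v lam)
    (hM : ∀ i, (M i).PosDef) (hK : ∀ i, (K i).PosSemidef) (hΔt : 0 < Δt) (hγ : 1 / 2 ≤ γ) :
    IsBounded (range v) := by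
  refine ((blockForm M).isBounded_setOf_apply_self_le (U := ⊤)
    (fun _ _ => blockForm_self_pos hM) (blockForm M (v 0) (v 0))).subset ?_
  rintro _ ⟨n, rfl⟩
  exact ⟨trivial, hs.massEnergy_antitone (fun i => (hM i).posSemidef) hK hΔt hγ (Nat.zero_le n)⟩

lemma stiffnessEnergy_le (hs : IsDContinuitySolution M K C Δt γ d v lam)
    (hM : ∀ i, (M i).PosSemidef) (hK : ∀ i, (K i).IsHermitian) (hΔt : 0 < Δt) (hγ : 1 / 2 ≤ γ)
    (n : ℕ) :
    blockForm K (d n) (d n) ≤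
      blockForm K (d 0) (d 0) + Δt * (γ - 1 / 2) * blockForm M (v 0) (v 0) := by
  have h := hs.modifiedEnergy_antitone hM hK hΔt (Nat.zero_le n)
  nlinarith [blockForm_self_nonneg hM (v n), mul_nonneg hΔt.le (sub_nonneg.2 hγ)]

lemma isBounded_range_d (hs : IsDContinuitySolution M K C Δt γ d v lam)
    (hM : ∀ i, (M i).PosDef) (hK : ∀ i, (K i).PosSemidef) (hΔt : 0 < Δt) (hγ : 1 / 2 ≤ γ) :
    IsBounded (range d) := by
  have hflex := (blockForm K).isBounded_setOf_apply_self_le (U := flexibleModes M K C)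
    (fun x hx hx0 => blockForm_self_pos_of_mem_flexibleModes hM hK hx hx0)
    (2 * (blockForm K (d 0) (d 0) + Δt * (γ - 1 / 2) * blockForm M (v 0) (v 0)) +
      2 * blockForm K (d 0) (d 0))
  refine ((isBounded_singleton (x := d 0)).add hflex).subset ?_
  rintro _ ⟨n, rfl⟩
  refine ⟨d 0, rfl, d n - d 0, ⟨?_, ?_⟩, add_sub_cancel _ _⟩
  · exact hs.sub_initial_mem_flexibleModes (fun i => (hK i).isHermitian) hΔt.ne' n
  · linarith [(blockForm K).apply_sub_self_add_apply_add_self (d n) (d 0),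
      hs.stiffnessEnergy_le (fun i => (hM i).posSemidef) (fun i => (hK i).isHermitian) hΔt hγ n,
      blockForm_self_nonneg hK (d n + d 0)]

lemma isBounded_range_lam (hs : IsDContinuitySolution M K C Δt γ d v lam)
    (hC : ∀ μ, (∀ i, (C i)ᵀ *ᵥ μ = 0) → μ = 0) (hv : IsBounded (range v))
    (hd : IsBounded (range d)) : IsBounded (range lam) := by
  have hker : LinearMap.ker (constraintTranspose C) = ⊥ :=
    LinearMap.ker_eq_bot'.mpr fun μ hμ => hC μ fun i => congrFun hμ i
  obtain ⟨c, -, hc⟩ := (constraintTranspose C).exists_antilipschitzWith hker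
  have himage : IsBounded (blockMulVec M '' range v + blockMulVec K '' range d) :=
    ((blockMulVec M).toContinuousLinearMap.lipschitz.isBounded_image hv).add
      ((blockMulVec K).toContinuousLinearMap.lipschitz.isBounded_image hd)
  refine (hc.isBounded_preimage himage).subset ?_
  rintro _ ⟨n, rfl⟩
  exact ⟨_, ⟨v n, ⟨n, rfl⟩, rfl⟩, _, ⟨d n, ⟨n, rfl⟩, rfl⟩, funext fun i => hs.equation n i⟩

end IsDContinuitySolution

end Scheme

lemma enorm_eq_norm_toLp {k : ℕ} (x : Fin k → ℝ) : _root_.enorm x = ‖WithLp.toLp 2 x‖ := by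
  simp [EuclideanSpace.norm_eq, _root_.enorm, dotProduct, sq]

lemma exists_enorm_le_of_isBounded {k : ℕ} {y : ℕ → Fin k → ℝ} (h : IsBounded (range y)) :
    ∃ R ≥ 0, ∀ n, _root_.enorm (y n) ≤ R := by
  obtain ⟨R, hR, hle⟩ :=
    ((PiLp.lipschitzWith_toLp 2 fun _ : Fin k => ℝ).isBounded_image h).exists_pos_norm_le
  exact ⟨R, hR.le, fun n =>
    (enorm_eq_norm_toLp _).trans_le (hle _ (mem_image_of_mem _ (mem_range_self n)))⟩

lemma exists_enorm_le_of_isBounded_pi {ι : Type*} [Fintype ι] {k : ι → ℕ}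
    {x : ℕ → ∀ i, Fin (k i) → ℝ} (h : IsBounded (range x)) :
    ∃ R ≥ 0, ∀ i n, _root_.enorm (x n i) ≤ R := by
  choose R hR0 hR using fun i => exists_enorm_le_of_isBounded (y := fun n => x n i)
    (range_comp (Function.eval i) x ▸ h.image_eval i)
  exact ⟨∑ i, R i, Finset.sum_nonneg fun i _ => hR0 i, fun i n =>
    (hR i n).trans (Finset.single_le_sum (fun j _ => hR0 j) (Finset.mem_univ i))⟩

theorem dContinuity_stable_for_gamma_gt_half_general
    (S m : ℕ) (nn : Fin S → ℕ)
    (M K : ∀ i : Fin S, Matrix (Fin (nn i)) (Fin (nn i)) ℝ)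
    (hM : ∀ i, (M i).PosDef) (hK : ∀ i, (K i).PosSemidef)
    (C : ∀ i : Fin S, Matrix (Fin m) (Fin (nn i)) ℝ)
    (Δt γ : ℝ) (hΔt : 0 < Δt) (hγ₀ : 1/2 < γ)
    (d v : ∀ i : Fin S, ℕ → (Fin (nn i) → ℝ)) (lam : ℕ → (Fin m → ℝ))
    (heq : ∀ i n, (M i).mulVec (v i n) + (K i).mulVec (d i n) = (C i)ᵀ.mulVec (lam n))
    (hupd : ∀ i n, d i (n + 1) = d i n + Δt • ((1 - γ) • v i n + γ • v i (n + 1)))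
    (hcont : ∀ n, ∑ i : Fin S, (C i).mulVec (d i n) = 0)
    (hind : ∀ μ : Fin m → ℝ, (∀ i, (C i)ᵀ.mulVec μ = 0) → μ = 0) :
    ∃ C₀ > (0 : ℝ), ∀ i : Fin S, ∀ n : ℕ,
      _root_.enorm (d i n) ≤ C₀ ∧ _root_.enorm (v i n) ≤ C₀ ∧ _root_.enorm (lam n) ≤ C₀ := by
  have hs : IsDContinuitySolution M K C Δt γ (fun n i => d i n) (fun n i => v i n) lam :=
    ⟨fun n i => heq i n, fun n => funext fun i => hupd i n,
      fun n => (constraintMap_apply C _).trans (hcont n)⟩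
  have hv := hs.isBounded_range_v hM hK hΔt hγ₀.le
  have hd := hs.isBounded_range_d hM hK hΔt hγ₀.le
  obtain ⟨Rd, hRd₀, hRd⟩ := exists_enorm_le_of_isBounded_pi hd
  obtain ⟨Rv, hRv₀, hRv⟩ := exists_enorm_le_of_isBounded_pi hv
  obtain ⟨Rl, hRl₀, hRl⟩ := exists_enorm_le_of_isBounded (hs.isBounded_range_lam hind hv hd)
  refine ⟨Rd + Rv + Rl + 1, by positivity, fun i n => ⟨?_, ?_, ?_⟩⟩ <;>
    linarith [hRd i n, hRv i n, hRl n]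

/-- Stability of the d-continuity method for `1/2 < γ ≤ 1`: with linearly independent
constraints, the temperatures, rates and Lagrange multipliers at integer time levels
are all bounded uniformly in `i` and `n`. -/
theorem dContinuity_stable_for_gamma_gt_half
    (S m : ℕ) (hS : 1 ≤ S) (nn : Fin S → ℕ)
    (M K : ∀ i : Fin S, Matrix (Fin (nn i)) (Fin (nn i)) ℝ)
    (hM : ∀ i, (M i).PosDef) (hK : ∀ i, (K i).PosSemidef)
    (C : ∀ i : Fin S, Matrix (Fin m) (Fin (nn i)) ℝ)
    (Δt γ : ℝ) (hΔt : 0 < Δt) (hγ₀ : 1/2 < γ) (hγ₁ : γ ≤ 1)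
    (d v : ∀ i : Fin S, ℕ → (Fin (nn i) → ℝ)) (lam : ℕ → (Fin m → ℝ))
    (heq : ∀ i n, (M i).mulVec (v i n) + (K i).mulVec (d i n) = (C i)ᵀ.mulVec (lam n))
    (hupd : ∀ i n, d i (n + 1) = d i n + Δt • ((1 - γ) • v i n + γ • v i (n + 1)))
    (hcont : ∀ n, ∑ i : Fin S, (C i).mulVec (d i n) = 0)
    (hind : ∀ μ : Fin m → ℝ, (∀ i, (C i)ᵀ.mulVec μ = 0) → μ = 0) :
    ∃ C₀ > (0 : ℝ), ∀ i : Fin S, ∀ n : ℕ,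
      _root_.enorm (d i n) ≤ C₀ ∧ _root_.enorm (v i n) ≤ C₀ ∧ _root_.enorm (lam n) ≤ C₀ :=
  dContinuity_stable_for_gamma_gt_half_general S m nn M K hM hK C Δt γ hΔt hγ₀ d v lam heq hupd
    hcont hind
end

section
/- Under the Baumgarte stabilized domain decomposition method with parameter α > 0, if for each i the matrix Ã_i := α*·M_i + Δt·(γ − 1/2)·K_i is positive semidefinite, where α* := 1 + α·(γ − 1/2), then the energy ∑_{i=1}^S v_i(n)ᵀ·(α·M_i + Δt·K_i)·v_i(n) is non-increasing in n: for all n ∈ ℕ, ∑_{i=1}^S v_i(n+1)ᵀ·(α·M_i + Δt·K_i)·v_i(n+1) ≤ ∑_{i=1}^S v_i(n)ᵀ·(α·M_i + Δt·K_i)·v_i(n). -/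
/-! Subtract the subdomain equations at steps `n` and `n + 1` and test the increment against
`Δt • Δvᵢ + α • Δdᵢ`. Summed over the subdomains, the multiplier term drops out, because the
increment of the Baumgarte constraint says exactly that `∑ Cᵢ (Δt • Δvᵢ + α • Δdᵢ) = 0`.
On the other hand, inserting the trapezoidal update `Δdᵢ = Δt • ((1 - γ) vᵢ(n) + γ vᵢ(n+1))` and
using the symmetry of `Mᵢ` and `Kᵢ`, each tested term equals
`Δt Δvᵢᵀ Ãᵢ Δvᵢ + α Δdᵢᵀ Kᵢ Δdᵢ + (Δt / 2) (Eᵢ(n+1) - Eᵢ(n))`, so the energy increment is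
minus a sum of nonnegative terms. -/

open Matrix Finset

variable {ι R : Type*} [Fintype ι]

namespace Matrix

theorem IsSymm.dotProduct_mulVec_comm [CommSemiring R] {A : Matrix ι ι R} (hA : A.IsSymm)
    (x y : ι → R) : x ⬝ᵥ A *ᵥ y = y ⬝ᵥ A *ᵥ x := by
  rw [dotProduct_mulVec, ← mulVec_transpose, hA.eq, dotProduct_comm]

theorem IsSymm.lerp_dotProduct_mulVec_sub [Field R] [CharZero R] {A : Matrix ι ι R}
    (hA : A.IsSymm) (γ : R) (p q : ι → R) :
    ((1 - γ) • p + γ • q) ⬝ᵥ A *ᵥ (q - p) =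
      (q ⬝ᵥ A *ᵥ q - p ⬝ᵥ A *ᵥ p) / 2 + (γ - 1 / 2) * ((q - p) ⬝ᵥ A *ᵥ (q - p)) := by
  simp only [mulVec_sub, dotProduct_sub, sub_dotProduct, add_dotProduct, smul_dotProduct,
    smul_eq_mul]
  rw [hA.dotProduct_mulVec_comm p q]
  ring

theorem IsSymm.baumgarte_step_identity [Field R] [CharZero R] {M K : Matrix ι ι R}
    (hM : M.IsSymm) (hK : K.IsSymm) (Δt γ α : R) (p q D : ι → R)
    (hD : D = Δt • ((1 - γ) • p + γ • q)) :
    (Δt • (q - p) + α • D) ⬝ᵥ (M *ᵥ (q - p) + K *ᵥ D) =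
      Δt * ((q - p) ⬝ᵥ ((1 + α * (γ - 1 / 2)) • M + (Δt * (γ - 1 / 2)) • K) *ᵥ (q - p))
        + α * (D ⬝ᵥ K *ᵥ D)
        + Δt / 2 * (q ⬝ᵥ (α • M + Δt • K) *ᵥ q - p ⬝ᵥ (α • M + Δt • K) *ᵥ p) := by
  have hKD : (q - p) ⬝ᵥ K *ᵥ D = Δt * (((1 - γ) • p + γ • q) ⬝ᵥ K *ᵥ (q - p)) := by
    rw [hD, hK.dotProduct_mulVec_comm, smul_dotProduct, smul_eq_mul]
  have hMD : D ⬝ᵥ M *ᵥ (q - p) = Δt * (((1 - γ) • p + γ • q) ⬝ᵥ M *ᵥ (q - p)) := by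
    rw [hD, smul_dotProduct, smul_eq_mul]
  simp only [add_mulVec, smul_mulVec, dotProduct_add, add_dotProduct,
    dotProduct_smul, smul_dotProduct, smul_eq_mul]
  rw [hKD, hMD, hM.lerp_dotProduct_mulVec_sub, hK.lerp_dotProduct_mulVec_sub]
  ring

end Matrix

theorem sum_dotProduct_transpose_mulVec {κ : ι → Type*} [∀ i, Fintype (κ i)] {m : Type*}
    [Fintype m] [CommSemiring R] (C : ∀ i, Matrix m (κ i) R) (w : ∀ i, κ i → R) (μ : m → R) :
    ∑ i, w i ⬝ᵥ (C i)ᵀ *ᵥ μ = (∑ i, C i *ᵥ w i) ⬝ᵥ μ := by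
  simp_rw [dotProduct_mulVec, vecMul_transpose, sum_dotProduct]

theorem sum_mulVec_baumgarte_increment_eq_zero {κ : ι → Type*} [∀ i, Fintype (κ i)] {m : Type*}
    [Field R] (C : ∀ i, Matrix m (κ i) R) {Δt α : R} (hΔt : Δt ≠ 0) {v d v' d' : ∀ i, κ i → R}
    (h : ∑ i, C i *ᵥ v i + (α / Δt) • ∑ i, C i *ᵥ d i = 0)
    (h' : ∑ i, C i *ᵥ v' i + (α / Δt) • ∑ i, C i *ᵥ d' i = 0) :
    ∑ i, C i *ᵥ (Δt • (v' i - v i) + α • (d' i - d i)) = 0 := by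
  simp only [mulVec_add, mulVec_smul, mulVec_sub, sum_add_distrib, ← smul_sum, sum_sub_distrib]
  calc _ = Δt • ((∑ i, C i *ᵥ v' i + (α / Δt) • ∑ i, C i *ᵥ d' i)
              - (∑ i, C i *ᵥ v i + (α / Δt) • ∑ i, C i *ᵥ d i)) := by
        simp only [smul_sub, smul_add, smul_smul, mul_div_cancel₀ _ hΔt]
        abel
    _ = 0 := by rw [h, h', sub_zero, smul_zero]

theorem sum_le_sum_of_sum_add_mul_sub_eq_zero [Field R] [LinearOrder R] [IsStrictOrderedRing R]
    {a f g : ι → R} {c : R} (hc : 0 < c)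
    (ha : ∀ i, 0 ≤ a i) (h : ∑ i, (a i + c * (f i - g i)) = 0) : ∑ i, f i ≤ ∑ i, g i := by
  rw [sum_add_distrib, ← mul_sum, sum_sub_distrib] at h
  have := sum_nonneg fun i (_ : i ∈ univ) => ha i
  nlinarith

theorem baumgarte_energy_nonincreasing_general
    (S m : ℕ) (nn : Fin S → ℕ)
    (M K : ∀ i : Fin S, Matrix (Fin (nn i)) (Fin (nn i)) ℝ)
    (hM : ∀ i, (M i).PosDef) (hK : ∀ i, (K i).PosSemidef)
    (C : ∀ i : Fin S, Matrix (Fin m) (Fin (nn i)) ℝ)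
    (Δt γ α : ℝ) (hΔt : 0 < Δt) (hα : 0 < α)
    (hAt : ∀ i, ((1 + α * (γ - 1/2)) • M i + (Δt * (γ - 1/2)) • K i).PosSemidef)
    (d v : ∀ i : Fin S, ℕ → (Fin (nn i) → ℝ)) (lam : ℕ → (Fin m → ℝ))
    (heq : ∀ i n, (M i).mulVec (v i n) + (K i).mulVec (d i n) = (C i)ᵀ.mulVec (lam n))
    (hupd : ∀ i n, d i (n + 1) = d i n + Δt • ((1 - γ) • v i n + γ • v i (n + 1)))
    (hcont : ∀ n, ∑ i : Fin S, (C i).mulVec (v i n) +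
      (α / Δt) • ∑ i : Fin S, (C i).mulVec (d i n) = 0) :
    ∀ n : ℕ,
      ∑ i : Fin S, v i (n + 1) ⬝ᵥ (α • M i + Δt • K i).mulVec (v i (n + 1)) ≤
        ∑ i : Fin S, v i n ⬝ᵥ (α • M i + Δt • K i).mulVec (v i n) := by
  intro n
  have hincr i : M i *ᵥ (v i (n + 1) - v i n) + K i *ᵥ (d i (n + 1) - d i n) =
      (C i)ᵀ *ᵥ (lam (n + 1) - lam n) := by
    simp only [mulVec_sub, ← heq]
    abel
  have hbalance : ∑ i, (Δt • (v i (n + 1) - v i n) + α • (d i (n + 1) - d i n)) ⬝ᵥ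
      (M i *ᵥ (v i (n + 1) - v i n) + K i *ᵥ (d i (n + 1) - d i n)) = 0 := by
    simp_rw [hincr, sum_dotProduct_transpose_mulVec,
      sum_mulVec_baumgarte_increment_eq_zero C hΔt.ne' (hcont n) (hcont (n + 1)), zero_dotProduct]
  have hsymm {k : ℕ} {A : Matrix (Fin k) (Fin k) ℝ} (hA : A.PosSemidef) : A.IsSymm :=
    isHermitian_iff_isSymm.mp hA.isHermitian
  have hnonneg {k : ℕ} {A : Matrix (Fin k) (Fin k) ℝ} (hA : A.PosSemidef) (x : Fin k → ℝ) :
      0 ≤ x ⬝ᵥ A *ᵥ x := by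
    simpa using hA.dotProduct_mulVec_nonneg x
  rw [sum_congr rfl fun i _ => (hsymm (hM i).posSemidef).baumgarte_step_identity (hsymm (hK i))
    Δt γ α (v i n) (v i (n + 1)) _ (by rw [hupd, add_sub_cancel_left])] at hbalance
  exact sum_le_sum_of_sum_add_mul_sub_eq_zero (half_pos hΔt) (fun i => add_nonneg
    (mul_nonneg hΔt.le (hnonneg (hAt i) _)) (mul_nonneg hα.le (hnonneg (hK i) _))) hbalance

/-- Under the Baumgarte stabilized domain decomposition method with parameter `α > 0`,
if each `Ãᵢ = α*·Mᵢ + Δt·(γ - 1/2)·Kᵢ` (with `α* = 1 + α·(γ - 1/2)`) is positive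
semidefinite, then the energy `∑ᵢ vᵢ(n)ᵀ·(α·Mᵢ + Δt·Kᵢ)·vᵢ(n)` is non-increasing. -/
theorem baumgarte_energy_nonincreasing
    (S m : ℕ) (hS : 1 ≤ S) (nn : Fin S → ℕ)
    (M K : ∀ i : Fin S, Matrix (Fin (nn i)) (Fin (nn i)) ℝ)
    (hM : ∀ i, (M i).PosDef) (hK : ∀ i, (K i).PosSemidef)
    (C : ∀ i : Fin S, Matrix (Fin m) (Fin (nn i)) ℝ)
    (Δt γ α : ℝ) (hΔt : 0 < Δt) (hγ₀ : 0 ≤ γ) (hγ₁ : γ ≤ 1) (hα : 0 < α)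
    (hAt : ∀ i, ((1 + α * (γ - 1/2)) • M i + (Δt * (γ - 1/2)) • K i).PosSemidef)
    (d v : ∀ i : Fin S, ℕ → (Fin (nn i) → ℝ)) (lam : ℕ → (Fin m → ℝ))
    (heq : ∀ i n, (M i).mulVec (v i n) + (K i).mulVec (d i n) = (C i)ᵀ.mulVec (lam n))
    (hupd : ∀ i n, d i (n + 1) = d i n + Δt • ((1 - γ) • v i n + γ • v i (n + 1)))
    (hcont : ∀ n, ∑ i : Fin S, (C i).mulVec (v i n) +
      (α / Δt) • ∑ i : Fin S, (C i).mulVec (d i n) = 0) :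
    ∀ n : ℕ,
      ∑ i : Fin S, v i (n + 1) ⬝ᵥ (α • M i + Δt • K i).mulVec (v i (n + 1)) ≤
        ∑ i : Fin S, v i n ⬝ᵥ (α • M i + Δt • K i).mulVec (v i n) :=
  baumgarte_energy_nonincreasing_general S m nn M K hM hK C Δt γ α hΔt hα hAt d v lam heq hupd hcont
end
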